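/- For every integer t ≥ 3 there exists a function f : ℕ → ℕ with the following property: for every finite simple graph G = (V, E) that is K_{3,t}-forbidden and every two independent sets I_0 and I_r of G with |I_0| = |I_r| = k that admit a token-jumping reconfiguration sequence in G, there exists a vertex set V' with I_0 ∪ I_r ⊆ V' ⊆ V and |V'| ≤ f(k) such that the minimum length of a token-jumping reconfiguration sequence from I_0 to I_r in the subgraph of G induced on V' equals the minimum length of a token-jumping reconfiguration sequence from I_0 to I_r in G. -/

import Mathlib

/-!
The kernel is the set of vertices visited by a shortest reconfiguration sequence, so it suffices
to bound the length `ℓ` of a shortest sequence from `I` to `J` by a function of `k` and `t`.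
Its `ℓ + 1` sets are distinct `k`-subsets of the visited vertices, so a long sequence visits many
vertices. In a `K_{3,t}`-free graph few of them have three neighbours in `I ∪ J`; pigeonhole and
Ramsey then give a large independent set `Q` of visited vertices sharing a neighbourhood `T` with
`|T| ≤ 2` in `I ∪ J`. If `|T| ≤ 1`, the tokens of `I` can be parked on `k` vertices of `Q` and
then moved onto `J`, so `ℓ ≤ 2k`. If `T = {u, w}`, every other vertex has fewer than `t`
neighbours in `Q`; the same parking argument shows that the stretch of the sequence between the
first and the last visit to `Q` has length at most `2k`, too short to visit all of `Q`.
-/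

/-- `I` is an independent set of `G` (as a finset of vertices). -/
def IsIndepFinset {V : Type*} (G : SimpleGraph V) (I : Finset V) : Prop :=
  ∀ u ∈ I, ∀ v ∈ I, ¬ G.Adj u v

/-- One token jump: exactly one token moves from `u ∈ I` to `v ∉ I`. -/
def TJStep {V : Type*} [DecidableEq V] (I J : Finset V) : Prop :=
  ∃ u v, u ∈ I ∧ v ∉ I ∧ I \ J = {u} ∧ J \ I = {v}

/-- `f 0, f 1, …, f ℓ` is a token-jumping reconfiguration sequence from `I` to `J`
in `G`, all of whose members are independent sets of cardinality `k`. -/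
def TJSeq {V : Type*} [DecidableEq V] (G : SimpleGraph V) (k : ℕ)
    (I J : Finset V) (ℓ : ℕ) (f : ℕ → Finset V) : Prop :=
  f 0 = I ∧ f ℓ = J ∧
  (∀ i ≤ ℓ, IsIndepFinset G (f i) ∧ (f i).card = k) ∧
  (∀ i < ℓ, TJStep (f i) (f (i + 1)))

/-- There is a token-jumping reconfiguration sequence from `I` to `J` in `G`. -/
def TJReachable {V : Type*} [DecidableEq V] (G : SimpleGraph V) (k : ℕ)
    (I J : Finset V) : Prop :=
  ∃ ℓ f, TJSeq G k I J ℓ f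

/-- There is a token-jumping reconfiguration sequence from `I` to `J` in the
subgraph of `G` induced on the vertex set `W` (equivalently: a sequence in `G`
all of whose members are contained in `W`). -/
def TJReachableWithin {V : Type*} [DecidableEq V] (G : SimpleGraph V) (k : ℕ)
    (I J : Finset V) (W : Finset V) : Prop :=
  ∃ ℓ f, TJSeq G k I J ℓ f ∧ ∀ i ≤ ℓ, f i ⊆ W

/-- `G` contains the complete bipartite graph `K_{p,q}` as a subgraph. -/
def ContainsKpq {V : Type*} (G : SimpleGraph V) (p q : ℕ) : Prop :=
  ∃ X Y : Finset V, Disjoint X Y ∧ X.card = p ∧ Y.card = q ∧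
    ∀ x ∈ X, ∀ y ∈ Y, G.Adj x y

namespace IsIndepFinset

variable {V : Type*} {G : SimpleGraph V} {s t : Finset V}

lemma mono (hs : IsIndepFinset G s) (hts : t ⊆ s) : IsIndepFinset G t :=
  fun u hu v hv => hs u (hts hu) v (hts hv)

lemma insert [DecidableEq V] {a : V} (hs : IsIndepFinset G s) (ha : ∀ b ∈ s, ¬ G.Adj a b) :
    IsIndepFinset G (insert a s) := by
  intro x hx y hy
  rw [Finset.mem_insert] at hx hy
  rcases hx with hx | hx <;> rcases hy with hy | hy <;> subst_vars
  · exact G.irrefl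
  · exact ha y hy
  · exact fun h => ha x hx h.symm
  · exact hs x hx y hy

end IsIndepFinset

section Reconfiguration

variable {V : Type*} [DecidableEq V] {G : SimpleGraph V} {k : ℕ}

lemma TJStep.symm {I J : Finset V} (h : TJStep I J) : TJStep J I := by
  obtain ⟨u, v, -, -, hIJ, hJI⟩ := h
  have hv : v ∈ J \ I := hJI ▸ Finset.mem_singleton_self v
  have hu : u ∈ I \ J := hIJ ▸ Finset.mem_singleton_self u
  exact ⟨v, u, (Finset.mem_sdiff.1 hv).1, (Finset.mem_sdiff.1 hu).2, hJI, hIJ⟩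

lemma TJStep.subset_insert {I J : Finset V} (h : TJStep I J) : ∃ v, J ⊆ insert v I := by
  obtain ⟨u, v, -, -, -, hJI⟩ := h
  refine ⟨v, fun x hx => ?_⟩
  by_cases hxI : x ∈ I
  · exact Finset.mem_insert_of_mem hxI
  · have : x ∈ J \ I := Finset.mem_sdiff.2 ⟨hx, hxI⟩
    rw [hJI, Finset.mem_singleton] at this
    exact this ▸ Finset.mem_insert_self v I

lemma tjStep_insert_erase {I : Finset V} {u v : V} (hu : u ∈ I) (hv : v ∉ I) :
    TJStep I (insert v (I.erase u)) :=
  ⟨u, v, hu, hv, by ext; grind, by ext; grind⟩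

namespace TJSeq

variable {I J K : Finset V} {ℓ m : ℕ} {g h : ℕ → Finset V}

lemma apply_zero (hg : TJSeq G k I J ℓ g) : g 0 = I := hg.1

lemma apply_length (hg : TJSeq G k I J ℓ g) : g ℓ = J := hg.2.1

lemma isIndepFinset (hg : TJSeq G k I J ℓ g) {i : ℕ} (hi : i ≤ ℓ) : IsIndepFinset G (g i) :=
  (hg.2.2.1 i hi).1

lemma card_eq (hg : TJSeq G k I J ℓ g) {i : ℕ} (hi : i ≤ ℓ) : (g i).card = k := (hg.2.2.1 i hi).2

lemma step (hg : TJSeq G k I J ℓ g) {i : ℕ} (hi : i < ℓ) : TJStep (g i) (g (i + 1)) :=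
  hg.2.2.2 i hi

lemma refl (hI : IsIndepFinset G I) (hk : I.card = k) : TJSeq G k I I 0 (fun _ => I) :=
  ⟨rfl, rfl, fun _ _ => ⟨hI, hk⟩, fun _ hi => absurd hi (Nat.not_lt_zero _)⟩

lemma single (hI : IsIndepFinset G I) (hIk : I.card = k) (hJ : IsIndepFinset G J)
    (hJk : J.card = k) (hIJ : TJStep I J) :
    TJSeq G k I J 1 (fun i => if i = 0 then I else J) := by
  refine ⟨rfl, rfl, fun i _ => ?_, fun i hi => ?_⟩
  · dsimp only
    split_ifs
    exacts [⟨hI, hIk⟩, ⟨hJ, hJk⟩]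
  · obtain rfl : i = 0 := by omega
    simpa using hIJ

lemma append (h₁ : TJSeq G k I J ℓ g) (h₂ : TJSeq G k J K m h) :
    TJSeq G k I K (ℓ + m) (fun i => if i ≤ ℓ then g i else h (i - ℓ)) := by
  obtain ⟨hg0, hgℓ, hg, hgs⟩ := h₁
  obtain ⟨hh0, hhm, hh, hhs⟩ := h₂
  have tail : ∀ i, ℓ ≤ i → (if i ≤ ℓ then g i else h (i - ℓ)) = h (i - ℓ) := by
    intro i hi
    split_ifs with h'
    · obtain rfl : i = ℓ := le_antisymm h' hi
      simp [hgℓ, hh0]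
    · rfl
  refine ⟨by simp [hg0], ?_, fun i hi => ?_, fun i hi => ?_⟩ <;> dsimp only
  · rw [tail _ (Nat.le_add_right _ _), Nat.add_sub_cancel_left, hhm]
  · rcases le_or_gt i ℓ with h' | h'
    · simpa [h'] using hg i h'
    · rw [tail i h'.le]; exact hh _ (by omega)
  · rcases lt_or_ge i ℓ with h' | h'
    · simpa [h'.le, Nat.succ_le_of_lt h'] using hgs i h'
    · rw [tail i h', tail (i + 1) (by omega), Nat.sub_add_comm h']
      exact hhs _ (by omega)

lemma reverse (hg : TJSeq G k I J ℓ g) : TJSeq G k J I ℓ (fun i => g (ℓ - i)) := by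
  obtain ⟨hg0, hgℓ, hg, hgs⟩ := hg
  refine ⟨by simp [hgℓ], by simp [hg0], fun i _ => hg _ (Nat.sub_le _ _), fun i hi => ?_⟩
  have e : ℓ - i = ℓ - (i + 1) + 1 := by omega
  simpa [← e] using (hgs (ℓ - (i + 1)) (by omega)).symm

lemma restrict (hg : TJSeq G k I J ℓ g) {a b : ℕ} (hab : a ≤ b) (hb : b ≤ ℓ) :
    TJSeq G k (g a) (g b) (b - a) (fun i => g (a + i)) := by
  obtain ⟨-, -, hg, hgs⟩ := hg
  refine ⟨by simp, by simp [Nat.add_sub_cancel' hab], fun i hi => hg _ (by omega),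
    fun i hi => ?_⟩
  simpa [Nat.add_assoc] using hgs (a + i) (by omega)

lemma card_biUnion_Icc_le (hg : TJSeq G k I J ℓ g) {a b : ℕ} (hab : a ≤ b) (hb : b ≤ ℓ) :
    ((Finset.Icc a b).biUnion g).card ≤ k + (b - a) := by
  induction b, hab using Nat.le_induction with
  | base => simp [hg.card_eq hb]
  | succ b hab ih =>
    obtain ⟨v, hv⟩ := (hg.step (by omega : b < ℓ)).subset_insert
    have hsub : (Finset.Icc a (b + 1)).biUnion g ⊆ insert v ((Finset.Icc a b).biUnion g) := by
      rw [← Finset.insert_Icc_right_eq_Icc_add_one (by omega), Finset.biUnion_insert]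
      refine Finset.union_subset (hv.trans (Finset.insert_subset_insert _ ?_))
        (Finset.subset_insert _ _)
      exact Finset.subset_biUnion_of_mem g (Finset.right_mem_Icc.2 hab)
    calc _ ≤ _ := Finset.card_le_card hsub
      _ ≤ _ := Finset.card_insert_le _ _
      _ ≤ k + (b + 1 - a) := by have := ih (by omega); omega

end TJSeq

/-- Tokens on `Y \ Q` jump one by one onto `Q \ Y`; moving the token on `u` first keeps every
intermediate set independent. -/
lemma exists_tjSeq_of_adj_imp_eq {Y Q : Finset V} {u : V} (hY : IsIndepFinset G Y)
    (hQ : IsIndepFinset G Q) (hcard : Y.card = Q.card)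
    (hadj : ∀ q ∈ Q \ Y, ∀ y ∈ Y \ Q, G.Adj q y → y = u) :
    ∃ g, TJSeq G Y.card Y Q (Y \ Q).card g := by
  induction hn : (Y \ Q).card generalizing Y with
  | zero =>
    obtain rfl : Y = Q := Finset.eq_of_subset_of_card_le (Finset.sdiff_eq_empty_iff_subset.1
      (Finset.card_eq_zero.1 hn)) hcard.ge
    exact ⟨_, TJSeq.refl hY rfl⟩
  | succ n ih =>
    obtain ⟨x, hx, hxu⟩ : ∃ x ∈ Y \ Q, u ∈ Y \ Q → x = u := by
      by_cases hu : u ∈ Y \ Q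
      · exact ⟨u, hu, fun _ => rfl⟩
      · obtain ⟨x, hx⟩ := Finset.card_pos.1 (by omega : 0 < (Y \ Q).card)
        exact ⟨x, hx, fun h => absurd h hu⟩
    obtain ⟨q, hq⟩ := Finset.card_pos.1
      (by rw [← Finset.card_sdiff_comm hcard]; omega : 0 < (Q \ Y).card)
    have hxY := (Finset.mem_sdiff.1 hx).1
    have hqY := (Finset.mem_sdiff.1 hq).2
    set Y' := insert q (Y.erase x)
    have hY' : IsIndepFinset G Y' := by
      refine (hY.mono (Finset.erase_subset x Y)).insert fun y hy hqy => ?_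
      by_cases hyQ : y ∈ Q
      · exact hQ q (Finset.mem_sdiff.1 hq).1 y hyQ hqy
      · have hyYQ : y ∈ Y \ Q := Finset.mem_sdiff.2 ⟨Finset.mem_of_mem_erase hy, hyQ⟩
        have hyu := hadj q hq y hyYQ hqy
        exact Finset.ne_of_mem_erase hy (hyu.trans (hxu (hyu ▸ hyYQ)).symm)
    have hY'card : Y'.card = Y.card := by
      rw [Finset.card_insert_of_notMem (fun h => hqY (Finset.mem_of_mem_erase h)),
        Finset.card_erase_add_one hxY]
    have hY'Q : Y' \ Q = (Y \ Q).erase x := by clear ih; ext; grind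
    have hQY' : Q \ Y' ⊆ Q \ Y := by clear ih; intro; grind
    obtain ⟨g, hg⟩ := ih hY' (hY'card.trans hcard)
      (fun q' hq' y hy => hadj q' (hQY' hq') y (Finset.mem_of_mem_erase (hY'Q ▸ hy)))
      (by rw [hY'Q, Finset.card_erase_of_mem hx, hn]; rfl)
    rw [hY'card] at hg
    exact ⟨_, Nat.add_comm 1 n ▸ (TJSeq.single hY rfl hY' hY'card
      (tjStep_insert_erase hxY hqY)).append hg⟩

lemma exists_tjSeq_le_of_adj_imp_eq {X Y Q : Finset V} {u : V} (hX : IsIndepFinset G X)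
    (hY : IsIndepFinset G Y) (hQ : IsIndepFinset G Q) (hXk : X.card = k) (hYk : Y.card = k)
    (hQk : k ≤ Q.card) (hadj : ∀ q ∈ Q, ∀ x ∈ X ∪ Y, G.Adj q x → x = u) :
    ∃ m ≤ k + k, ∃ g, TJSeq G k X Y m g := by
  obtain ⟨Q, hQQ, hQk⟩ := Finset.exists_subset_card_eq hQk
  replace hQ := hQ.mono hQQ
  replace hadj := fun q hq => hadj q (hQQ hq)
  obtain ⟨g₁, hg₁⟩ := exists_tjSeq_of_adj_imp_eq (u := u) hX hQ (hXk.trans hQk.symm)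
    fun q hq x hx => hadj q (Finset.mem_sdiff.1 hq).1 x
      (Finset.mem_union_left _ (Finset.mem_sdiff.1 hx).1)
  obtain ⟨g₂, hg₂⟩ := exists_tjSeq_of_adj_imp_eq (u := u) hY hQ (hYk.trans hQk.symm)
    fun q hq y hy => hadj q (Finset.mem_sdiff.1 hq).1 y
      (Finset.mem_union_right _ (Finset.mem_sdiff.1 hy).1)
  rw [hXk] at hg₁
  rw [hYk] at hg₂
  refine ⟨_, ?_, _, hg₁.append hg₂.reverse⟩
  have := Finset.card_le_card (Finset.sdiff_subset (s := X) (t := Q))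
  have := Finset.card_le_card (Finset.sdiff_subset (s := Y) (t := Q))
  omega

end Reconfiguration

def IsShortestTJSeq {V : Type*} [DecidableEq V] (G : SimpleGraph V) (k : ℕ) (I J : Finset V)
    (ℓ : ℕ) (g : ℕ → Finset V) : Prop :=
  TJSeq G k I J ℓ g ∧ ∀ m g', TJSeq G k I J m g' → ℓ ≤ m

namespace IsShortestTJSeq

variable {V : Type*} [DecidableEq V] {G : SimpleGraph V} {k : ℕ} {I J : Finset V} {ℓ : ℕ}
  {g : ℕ → Finset V}

lemma of_reachable (h : TJReachable G k I J) :
    ∃ g, IsShortestTJSeq G k I J (sInf {ℓ | ∃ g, TJSeq G k I J ℓ g}) g := by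
  obtain ⟨g, hg⟩ := Nat.sInf_mem h
  exact ⟨g, hg, fun m g' hg' => Nat.sInf_le ⟨g', hg'⟩⟩

lemma sub_le_of_tjSeq (hg : IsShortestTJSeq G k I J ℓ g) {i j m : ℕ} {g' : ℕ → Finset V}
    (hij : i ≤ j) (hj : j ≤ ℓ) (h : TJSeq G k (g i) (g j) m g') : j - i ≤ m := by
  have hpre := hg.1.restrict (Nat.zero_le i) (hij.trans hj)
  have hsuf := hg.1.restrict hj le_rfl
  rw [hg.1.apply_zero] at hpre
  rw [hg.1.apply_length] at hsuf
  have := hg.2 _ _ ((hpre.append h).append hsuf)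
  omega

lemma injOn (hg : IsShortestTJSeq G k I J ℓ g) : Set.InjOn g (Finset.Icc 0 ℓ) := by
  have key : ∀ i j, i ≤ j → j ≤ ℓ → g i = g j → i = j := fun i j hij hj hgij => by
    have hrefl := TJSeq.refl (hg.1.isIndepFinset (hij.trans hj)) (hg.1.card_eq (hij.trans hj))
    have := hg.sub_le_of_tjSeq hij hj (by rw [← hgij]; exact hrefl)
    omega
  intro i hi j hj hgij
  simp only [Finset.coe_Icc, Set.mem_Icc] at hi hj
  rcases le_total i j with hij | hji
  exacts [key i j hij hj.2 hgij, (key j i hji hi.2 hgij.symm).symm]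

lemma add_one_le_choose (hg : IsShortestTJSeq G k I J ℓ g) :
    ℓ + 1 ≤ ((Finset.Icc 0 ℓ).biUnion g).card.choose k := by
  have hmaps : Set.MapsTo g (Finset.Icc 0 ℓ) (((Finset.Icc 0 ℓ).biUnion g).powersetCard k) :=
    fun i hi => Finset.mem_powersetCard.2
      ⟨Finset.subset_biUnion_of_mem g hi, hg.1.card_eq (Finset.mem_Icc.1 hi).2⟩
  simpa using Finset.card_le_card_of_injOn g hmaps hg.injOn

end IsShortestTJSeq

section CompleteBipartite

variable {V : Type*} {G : SimpleGraph V} {p q : ℕ}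

lemma card_lt_of_forall_adj (hK : ¬ ContainsKpq G p q) {S Y : Finset V} (hS : S.card = p)
    (hY : ∀ y ∈ Y, ∀ x ∈ S, G.Adj x y) : Y.card < q := by
  by_contra! h
  obtain ⟨Y', hY'Y, hY'⟩ := Finset.exists_subset_card_eq h
  exact hK ⟨S, Y', Finset.disjoint_left.2 fun x hxS hxY => G.irrefl (hY x (hY'Y hxY) x hxS),
    hS, hY', fun x hx y hy => hY y (hY'Y hy) x hx⟩

variable [DecidableEq V]

lemma containsKpq_of_isNClique {c : Finset V} (hc : G.IsNClique (p + q) c) :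
    ContainsKpq G p q := by
  obtain ⟨X, hXc, hX⟩ := Finset.exists_subset_card_eq (show p ≤ c.card by rw [hc.card_eq]; omega)
  refine ⟨X, c \ X, Finset.disjoint_sdiff, hX, ?_, fun x hx y hy => ?_⟩
  · rw [Finset.card_sdiff_of_subset hXc, hc.card_eq, hX]
    omega
  · exact hc.isClique (hXc hx) (Finset.sdiff_subset hy)
      fun h => (Finset.mem_sdiff.1 hy).2 (h ▸ hx)

/-- The Erdős–Szekeres form of Ramsey's theorem. -/
theorem exists_isNClique_or_isNClique_compl (G : SimpleGraph V) (a b : ℕ) {s : Finset V}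
    (hs : (a + b).choose a ≤ s.card) :
    (∃ c ⊆ s, G.IsNClique a c) ∨ ∃ c ⊆ s, Gᶜ.IsNClique b c := by
  induction a generalizing b s with
  | zero => exact Or.inl ⟨∅, Finset.empty_subset _, by simp⟩
  | succ a iha =>
    induction b generalizing s with
    | zero => exact Or.inr ⟨∅, Finset.empty_subset _, by simp⟩
    | succ b ihb =>
      classical
      obtain ⟨v, hv⟩ := Finset.card_pos.1 ((Nat.choose_pos (by omega)).trans_le hs)
      set N := (s.erase v).filter (G.Adj v)
      set M := (s.erase v).filter (fun x => ¬ G.Adj v x)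
      have hNs : N ⊆ s := (Finset.filter_subset _ _).trans (Finset.erase_subset v s)
      have hMs : M ⊆ s := (Finset.filter_subset _ _).trans (Finset.erase_subset v s)
      have hNM : N.card + M.card + 1 = s.card := by
        rw [Finset.card_filter_add_card_filter_not, Finset.card_erase_add_one hv]
      have hpascal : (a + 1 + (b + 1)).choose (a + 1) =
          (a + (b + 1)).choose a + (a + 1 + b).choose (a + 1) := by
        rw [show a + 1 + (b + 1) = a + (b + 1) + 1 by omega, Nat.choose_succ_succ,
          show a + (b + 1) = a + 1 + b by omega]
      rcases le_or_gt ((a + (b + 1)).choose a) N.card with hN | hN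
      · rcases iha (b + 1) hN with ⟨c, hcN, hc⟩ | ⟨c, hcN, hc⟩
        · exact Or.inl ⟨insert v c, Finset.insert_subset hv (hcN.trans hNs),
            hc.insert fun x hx => (Finset.mem_filter.1 (hcN hx)).2⟩
        · exact Or.inr ⟨c, hcN.trans hNs, hc⟩
      · rcases ihb (s := M) (by omega) with ⟨c, hcM, hc⟩ | ⟨c, hcM, hc⟩
        · exact Or.inl ⟨c, hcM.trans hMs, hc⟩
        · refine Or.inr ⟨insert v c, Finset.insert_subset hv (hcM.trans hMs),
            hc.insert fun x hx => ?_⟩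
          obtain ⟨hxs, hvx⟩ := Finset.mem_filter.1 (hcM hx)
          exact (G.compl_adj v x).2 ⟨(Finset.ne_of_mem_erase hxs).symm, hvx⟩

lemma exists_isIndepFinset_of_not_containsKpq (hK : ¬ ContainsKpq G p q) {D : ℕ}
    {R : Finset V} (hR : (p + q + D).choose (p + q) ≤ R.card) :
    ∃ Q ⊆ R, IsIndepFinset G Q ∧ Q.card = D := by
  rcases exists_isNClique_or_isNClique_compl G _ _ hR with ⟨c, -, hc⟩ | ⟨Q, hQR, hQ⟩
  · exact absurd (containsKpq_of_isNClique hc) hK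
  · exact ⟨Q, hQR, fun x hx y hy hxy =>
      ((G.compl_adj x y).1 (hQ.isClique hx hy hxy.ne)).2 hxy, hQ.card_eq⟩

lemma card_filter_le_choose_mul [DecidableRel G.Adj] (hK : ¬ ContainsKpq G p q)
    (A S : Finset V) :
    (S.filter fun v => p ≤ (A.filter (G.Adj v)).card).card ≤ A.card.choose p * (q - 1) := by
  by_contra! h
  set B := S.filter fun v => p ≤ (A.filter (G.Adj v)).card
  have hex : ∀ v ∈ B, ∃ P ∈ A.powersetCard p, P ⊆ A.filter (G.Adj v) := fun v hv => by
    obtain ⟨P, hP, hPc⟩ := Finset.exists_subset_card_eq (Finset.mem_filter.1 hv).2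
    exact ⟨P, Finset.mem_powersetCard.2 ⟨hP.trans (Finset.filter_subset _ _), hPc⟩, hP⟩
  choose! φ hφ using hex
  obtain ⟨P, hP, hfib⟩ := Finset.exists_lt_card_fiber_of_mul_lt_card_of_maps_to
    (fun v hv => (hφ v hv).1) (by rwa [Finset.card_powersetCard])
  have := card_lt_of_forall_adj hK (Y := B.filter fun v => φ v = P)
      (Finset.mem_powersetCard.1 hP).2 fun y hy x hx => by
    obtain ⟨hyB, rfl⟩ := Finset.mem_filter.1 hy
    exact ((Finset.mem_filter.1 ((hφ y hyB).2 hx)).2).symm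
  omega

/-- Pigeonholing the neighbourhoods in `A`: few vertices see three vertices of `A`, and the
remaining ones have at most `2 ^ A.card` possible neighbourhoods. -/
lemma exists_large_common_trace (hK : ¬ ContainsKpq G 3 q) (A S : Finset V) {W : ℕ}
    (hS : 2 ^ A.card * (q + W) < S.card) :
    ∃ R ⊆ S, ∃ T ⊆ A, T.card ≤ 2 ∧ W ≤ R.card ∧ ∀ r ∈ R, ∀ a ∈ A, G.Adj r a ↔ a ∈ T := by
  classical
  set good := S.filter fun v => ¬ 3 ≤ (A.filter (G.Adj v)).card
  have hbad := card_filter_le_choose_mul hK A S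
  have hsplit : (S.filter fun v => 3 ≤ (A.filter (G.Adj v)).card).card + good.card = S.card :=
    Finset.card_filter_add_card_filter_not _
  have hchoose : A.card.choose 3 * (q - 1) ≤ 2 ^ A.card * q :=
    Nat.mul_le_mul (Nat.choose_le_two_pow _ _) (Nat.sub_le _ _)
  have hgood : A.powerset.card * W < good.card := by
    rw [Finset.card_powerset]
    rw [Nat.mul_add] at hS
    omega
  obtain ⟨T, hTA, hfib⟩ := Finset.exists_lt_card_fiber_of_mul_lt_card_of_maps_to
    (fun v _ => Finset.mem_powerset.2 (Finset.filter_subset (G.Adj v) A)) hgood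
  obtain ⟨r, hr⟩ := Finset.card_pos.1 (Nat.zero_lt_of_lt hfib)
  obtain ⟨hrgood, hrT⟩ := Finset.mem_filter.1 hr
  refine ⟨_, (Finset.filter_subset _ _).trans (Finset.filter_subset _ S), T,
    Finset.mem_powerset.1 hTA, ?_, hfib.le, fun r' hr' a ha => ?_⟩
  · rw [← hrT]
    have := (Finset.mem_filter.1 hrgood).2
    omega
  · rw [← (Finset.mem_filter.1 hr').2, Finset.mem_filter]
    exact ⟨fun h => ⟨ha, h⟩, And.right⟩

lemma exists_subset_forall_not_adj (hK : ¬ ContainsKpq G 3 q) {u w : V} (huw : u ≠ w)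
    {Q Z : Finset V} (hQ : ∀ x ∈ Q, G.Adj x u ∧ G.Adj x w) (hu : u ∉ Z) (hw : w ∉ Z) {n : ℕ}
    (hn : Z.card * q + n ≤ Q.card) :
    ∃ Q' ⊆ Q, Q'.card = n ∧ ∀ x ∈ Q', ∀ z ∈ Z, ¬ G.Adj x z := by
  classical
  set blocked := Z.biUnion fun z => Q.filter (G.Adj z)
  have hblocked : blocked.card ≤ Z.card * q := by
    refine Finset.card_biUnion_le_card_mul _ _ _ fun z hz => (card_lt_of_forall_adj hK
      (Finset.card_eq_three.2 ⟨u, w, z, huw, ?_, ?_, rfl⟩) fun y hy x hx => ?_).le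
    · rintro rfl; exact hu hz
    · rintro rfl; exact hw hz
    · obtain ⟨hyQ, hzy⟩ := Finset.mem_filter.1 hy
      simp only [Finset.mem_insert, Finset.mem_singleton] at hx
      rcases hx with rfl | rfl | rfl
      exacts [(hQ y hyQ).1.symm, (hQ y hyQ).2.symm, hzy]
  obtain ⟨Q', hQ', hQ'n⟩ := Finset.exists_subset_card_eq
    (show n ≤ (Q \ blocked).card by have := Finset.le_card_sdiff blocked Q; omega)
  refine ⟨Q', hQ'.trans Finset.sdiff_subset, hQ'n, fun x hx z hz hxz => ?_⟩
  exact (Finset.mem_sdiff.1 (hQ' hx)).2 (Finset.mem_biUnion.2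
    ⟨z, hz, Finset.mem_filter.2 ⟨(Finset.mem_sdiff.1 (hQ' hx)).1, hxz.symm⟩⟩)

end CompleteBipartite

/-- A shortest sequence longer than this visits more than `2 ^ (2 * k) * (t + W)` vertices, where
`W` is the Ramsey bound guaranteeing `2 * k * t + 3 * k + 1` independent vertices in a
`K_{3,t}`-free graph. -/
def lengthBound (t k : ℕ) : ℕ :=
  2 * k + (2 ^ (2 * k) * (t + (3 + t + (2 * k * t + 3 * k + 1)).choose (3 + t))).choose k

namespace IsShortestTJSeq

variable {V : Type*} [DecidableEq V] {G : SimpleGraph V} {k t : ℕ} {I J : Finset V} {ℓ : ℕ}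
  {g : ℕ → Finset V}

lemma sub_le_of_adj_imp_eq (hg : IsShortestTJSeq G k I J ℓ g) {i j : ℕ} (hij : i ≤ j)
    (hj : j ≤ ℓ) {Q : Finset V} {u : V} (hQ : IsIndepFinset G Q) (hQk : k ≤ Q.card)
    (hadj : ∀ q ∈ Q, ∀ x ∈ g i ∪ g j, G.Adj q x → x = u) : j - i ≤ k + k := by
  obtain ⟨m, hm, g', hg'⟩ := exists_tjSeq_le_of_adj_imp_eq
    (hg.1.isIndepFinset (hij.trans hj)) (hg.1.isIndepFinset hj) hQ (hg.1.card_eq (hij.trans hj))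
    (hg.1.card_eq hj) hQk hadj
  have := hg.sub_le_of_tjSeq hij hj hg'
  omega

/-- The vertices of `Q` are visited within a window `[i, j]` whose end sets can be joined through
`k` vertices of `Q` avoiding their neighbourhoods, so the window, and hence `Q`, is short. -/
lemma card_le_of_forall_adj_pair (hK : ¬ ContainsKpq G 3 t) (hg : IsShortestTJSeq G k I J ℓ g)
    {Q : Finset V} (hQg : ∀ q ∈ Q, ∃ i ≤ ℓ, q ∈ g i) (hQ : IsIndepFinset G Q) {u w : V}
    (huw : u ≠ w) (hQuw : ∀ q ∈ Q, G.Adj q u ∧ G.Adj q w) : Q.card ≤ 2 * k * t + 3 * k := by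
  by_contra! hQc
  choose! τ hτ using hQg
  have hne : Q.Nonempty := Finset.card_pos.1 (by omega)
  obtain ⟨q₀, hq₀, hmin⟩ := Q.exists_min_image τ hne
  obtain ⟨q₁, hq₁, hmax⟩ := Q.exists_max_image τ hne
  have hij : τ q₀ ≤ τ q₁ := hmin q₁ hq₁
  have hj : τ q₁ ≤ ℓ := (hτ q₁ hq₁).1
  have hi : τ q₀ ≤ ℓ := hij.trans hj
  have hends : (g (τ q₀) ∪ g (τ q₁)).card ≤ k + k :=
    (Finset.card_union_le _ _).trans (by rw [hg.1.card_eq hi, hg.1.card_eq hj])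
  have hnot : ∀ v, (∀ q ∈ Q, G.Adj q v) → v ∉ g (τ q₀) ∪ g (τ q₁) := fun v hv hvg => by
    rcases Finset.mem_union.1 hvg with h | h
    · exact hg.1.isIndepFinset hi _ (hτ q₀ hq₀).2 v h (hv q₀ hq₀)
    · exact hg.1.isIndepFinset hj _ (hτ q₁ hq₁).2 v h (hv q₁ hq₁)
  obtain ⟨Q', hQ'Q, hQ'k, hQ'⟩ := exists_subset_forall_not_adj hK huw hQuw
    (hnot u fun q hq => (hQuw q hq).1) (hnot w fun q hq => (hQuw q hq).2) (n := k)
    (by nlinarith [Nat.mul_le_mul_right t hends])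
  have hwindow := hg.sub_le_of_adj_imp_eq hij hj (hQ.mono hQ'Q) hQ'k.ge (u := u)
    fun q hq x hx hqx => absurd hqx (hQ' q hq x hx)
  have hQsub : Q ⊆ (Finset.Icc (τ q₀) (τ q₁)).biUnion g := fun q hq =>
    Finset.mem_biUnion.2 ⟨τ q, Finset.mem_Icc.2 ⟨hmin q hq, hmax q hq⟩, (hτ q hq).2⟩
  have := (Finset.card_le_card hQsub).trans (hg.1.card_biUnion_Icc_le hij hj)
  omega

lemma length_le (hK : ¬ ContainsKpq G 3 t) (hg : IsShortestTJSeq G k I J ℓ g) :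
    ℓ ≤ lengthBound t k := by
  by_contra! hℓ
  unfold lengthBound at hℓ
  set D := 2 * k * t + 3 * k + 1
  have hIk : I.card = k := hg.1.apply_zero ▸ hg.1.card_eq ℓ.zero_le
  have hJk : J.card = k := hg.1.apply_length ▸ hg.1.card_eq le_rfl
  have hU : 2 ^ (I ∪ J).card * (t + (3 + t + D).choose (3 + t)) <
      ((Finset.Icc 0 ℓ).biUnion g).card := by
    by_contra! hle
    have hIJ : (I ∪ J).card ≤ 2 * k := by have := Finset.card_union_le I J; omega
    have := Nat.choose_le_choose k
      (hle.trans (Nat.mul_le_mul_right _ (Nat.pow_le_pow_right two_pos hIJ)))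
    have := hg.add_one_le_choose
    omega
  obtain ⟨R, hRU, T, hTA, hT, hWR, hRT⟩ := exists_large_common_trace hK (I ∪ J) _ hU
  obtain ⟨Q, hQR, hQ, hQD⟩ := exists_isIndepFinset_of_not_containsKpq hK hWR
  have hQg : ∀ q ∈ Q, ∃ i ≤ ℓ, q ∈ g i := fun q hq => by simpa using hRU (hQR hq)
  rcases Nat.lt_or_ge T.card 2 with hT1 | hT2
  · obtain ⟨q, -⟩ := Finset.card_pos.1 (by omega : 0 < Q.card)
    have : Nonempty V := ⟨q⟩
    obtain ⟨u, hu⟩ := Finset.card_le_one_iff_subset_singleton.1 (Nat.lt_succ_iff.1 hT1)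
    have := hg.sub_le_of_adj_imp_eq ℓ.zero_le le_rfl hQ (by omega) (u := u)
      fun q hq x hx hqx => by
        rw [hg.1.apply_zero, hg.1.apply_length] at hx
        exact Finset.mem_singleton.1 (hu ((hRT q (hQR hq) x hx).1 hqx))
    omega
  · obtain ⟨u, w, huw, rfl⟩ := Finset.card_eq_two.1 (le_antisymm hT hT2)
    have := hg.card_le_of_forall_adj_pair hK hQg hQ huw fun q hq =>
      ⟨(hRT q (hQR hq) u (hTA (by simp))).2 (by simp),
        (hRT q (hQR hq) w (hTA (by simp))).2 (by simp)⟩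
    omega

end IsShortestTJSeq

theorem k3t_kernel_shortest_exists_general (t : ℕ) :
    ∃ f : ℕ → ℕ,
      ∀ (V : Type) [Fintype V] [DecidableEq V] (G : SimpleGraph V),
        ¬ ContainsKpq G 3 t →
        ∀ (k : ℕ) (I0 Ir : Finset V),
          IsIndepFinset G I0 → IsIndepFinset G Ir →
          I0.card = k → Ir.card = k →
          TJReachable G k I0 Ir →
          ∃ V' : Finset V, I0 ∪ Ir ⊆ V' ∧ V'.card ≤ f k ∧
            sInf {ℓ : ℕ | ∃ g : ℕ → Finset V,
                TJSeq G k I0 Ir ℓ g ∧ ∀ i ≤ ℓ, g i ⊆ V'} =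
            sInf {ℓ : ℕ | ∃ g : ℕ → Finset V, TJSeq G k I0 Ir ℓ g} := by
  refine ⟨fun k => k + lengthBound t k, fun V _ _ G hK k I0 Ir _ _ _ _ hreach => ?_⟩
  obtain ⟨g, hg⟩ := IsShortestTJSeq.of_reachable hreach
  set L := sInf {ℓ | ∃ g, TJSeq G k I0 Ir ℓ g}
  have hgU : ∀ i ≤ L, g i ⊆ (Finset.Icc 0 L).biUnion g := fun i hi =>
    Finset.subset_biUnion_of_mem g (Finset.mem_Icc.2 ⟨i.zero_le, hi⟩)
  refine ⟨(Finset.Icc 0 L).biUnion g, ?_, ?_, ?_⟩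
  · rw [← hg.1.apply_zero, ← hg.1.apply_length]
    exact Finset.union_subset (hgU 0 L.zero_le) (hgU L le_rfl)
  · have := hg.length_le hK
    have := hg.1.card_biUnion_Icc_le L.zero_le le_rfl
    show _ ≤ k + lengthBound t k
    omega
  · have hL : L ∈ {ℓ | ∃ g', TJSeq G k I0 Ir ℓ g' ∧ ∀ i ≤ ℓ, g' i ⊆ (Finset.Icc 0 L).biUnion g} :=
      ⟨g, hg.1, hgU⟩
    obtain ⟨g', hg', -⟩ := Nat.sInf_mem ⟨L, hL⟩
    exact le_antisymm (Nat.sInf_le hL) (hg.2 _ _ hg')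

/-- kernelization preserving the shortest length of a
reconfiguration sequence for `K_{3,t}`-forbidden graphs. -/
theorem k3t_kernel_shortest_exists (t : ℕ) (ht : 3 ≤ t) :
    ∃ f : ℕ → ℕ,
      ∀ (V : Type) [Fintype V] [DecidableEq V] (G : SimpleGraph V),
        ¬ ContainsKpq G 3 t →
        ∀ (k : ℕ) (I0 Ir : Finset V),
          IsIndepFinset G I0 → IsIndepFinset G Ir →
          I0.card = k → Ir.card = k →
          TJReachable G k I0 Ir →
          ∃ V' : Finset V, I0 ∪ Ir ⊆ V' ∧ V'.card ≤ f k ∧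
            sInf {ℓ : ℕ | ∃ g : ℕ → Finset V,
                TJSeq G k I0 Ir ℓ g ∧ ∀ i ≤ ℓ, g i ⊆ V'} =
            sInf {ℓ : ℕ | ∃ g : ℕ → Finset V, TJSeq G k I0 Ir ℓ g} :=
  k3t_kernel_shortest_exists_general t
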